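/- Consider the Game of Graph Nim on the disjoint union of a triangle (edges AB, BC, CA) and a single edge DE, with all edge weights positive. Suppose w(DE) = w(AB) + w(BC) + w(CA), the weights w(AB), w(BC), w(CA) are not all equal, and the multiset {w(AB), w(BC), w(CA)} is not special. Then the configuration is a losing position for the player to move. -/
import Mathlib


namespace GraphNim

variable {V E : Type} [Fintype E]

/-- A legal move in the Game of Graph Nim: choose a vertex `v` and weakly decrease
the weights of edges incident to `v` (all other edges unchanged), strictly
decreasing the total weight. -/
def Move (inc : V → E → Prop) (w w' : E → ℕ) : Prop :=
  ∃ v : V, (∀ e, w' e ≤ w e) ∧ (∀ e, ¬ inc v e → w' e = w e) ∧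
    (∑ e, w' e) < (∑ e, w e)

/-- A configuration is losing for the player to move: every legal move leads to a
non-losing configuration (the all-zero configuration is vacuously losing). -/
def Losing (inc : V → E → Prop) (w : E → ℕ) : Prop :=
  ∀ w', Move inc w w' → ¬ Losing inc w'
termination_by ∑ e, w e
decreasing_by
  rename_i h
  obtain ⟨v, _, _, h3⟩ := h
  exact h3

/-- A configuration is winning for the player to move: some legal move leads to a
losing configuration. -/
def Winning (inc : V → E → Prop) (w : E → ℕ) : Prop :=
  ∃ w', Move inc w w' ∧ Losing inc w'

end GraphNim

open GraphNim

/-- Endpoints of the edges of the graph `G₄` (triangle `ABC` plus a disjoint edge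
`DE`): vertices `A = 0, B = 1, C = 2, D = 3, E = 4`, edges `AB = 0, BC = 1,
CA = 2, DE = 3`. -/
def g4Ends : Fin 4 → Fin 5 × Fin 5
  | 0 => (0, 1)
  | 1 => (1, 2)
  | 2 => (2, 0)
  | 3 => (3, 4)

def g4Inc (v : Fin 5) (e : Fin 4) : Prop := (g4Ends e).1 = v ∨ (g4Ends e).2 = v

/-- A multiset of three positive integers is special if it equals
`{k+1+(m+1)ℓ, k+i+(m+1)ℓ, k+m+2−i+(m+1)ℓ}` for positive `k, m, i` and natural
`ℓ` with `1 ≤ i ≤ m+1` and `m(m+1)/2 ≤ k ≤ m(m+3)/2`. -/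
def Special (S : Multiset ℕ) : Prop :=
  ∃ k m i ℓ : ℕ, 0 < k ∧ 0 < m ∧ 0 < i ∧ i ≤ m + 1 ∧
    m * (m + 1) / 2 ≤ k ∧ k ≤ m * (m + 3) / 2 ∧
    S = {k + 1 + (m + 1) * ℓ, k + i + (m + 1) * ℓ, k + m + 2 - i + (m + 1) * ℓ}



namespace G4A

/-- Triangular numbers. -/
def T : ℕ → ℕ
  | 0 => 0
  | m + 1 => T m + m + 1

lemma T_mono {a b : ℕ} (h : a ≤ b) : T a ≤ T b := by
  induction b with
  | zero => have : a = 0 := by omega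
            subst this; exact le_refl _
  | succ n ih =>
    rcases Nat.lt_or_ge a (n + 1) with h' | h'
    · have := ih (by omega); simp only [T]; omega
    · have : a = n + 1 := by omega
      subst this; exact le_refl _

lemma T_one : T 1 = 1 := rfl

lemma T_pos {m : ℕ} (h : 1 ≤ m) : 1 ≤ T m := by
  have := T_mono h; simpa [T_one] using this

lemma T_add_lt {a b : ℕ} (h : a < b) : T a + a < T b := by
  have : T (a + 1) ≤ T b := T_mono h
  simp only [T] at this; omega

/-- value interval uniqueness -/
lemma T_uniq {m m' v : ℕ} (h1 : T m ≤ v) (h2 : v ≤ T m + m)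
    (h1' : T m' ≤ v) (h2' : v ≤ T m' + m') : m = m' := by
  rcases Nat.lt_trichotomy m m' with h | h | h
  · have := T_add_lt h; omega
  · exact h
  · have := T_add_lt h; omega

lemma mval_exists {v : ℕ} (h : 1 ≤ v) : ∃ m, 1 ≤ m ∧ T m ≤ v ∧ v ≤ T m + m := by
  induction v with
  | zero => omega
  | succ n ih =>
    rcases Nat.eq_zero_or_pos n with hn | hn
    · exact ⟨1, by simp [hn, T_one]⟩
    · obtain ⟨m, hm1, hm2, hm3⟩ := ih hn
      rcases Nat.lt_or_ge n (T m + m) with h' | h'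
      · exact ⟨m, hm1, by omega, by omega⟩
      · refine ⟨m + 1, by omega, ?_, ?_⟩ <;> simp only [T] <;> omega

lemma T_two_mul (m : ℕ) : 2 * T m = m * (m + 1) := by
  induction m with
  | zero => rfl
  | succ n ih => simp only [T]; ring_nf; ring_nf at ih; omega

lemma T_eq (m : ℕ) : T m = m * (m + 1) / 2 := by
  have := T_two_mul m; omega

lemma T_eq' (m : ℕ) : T m + m = m * (m + 3) / 2 := by
  have h1 := T_two_mul m
  have h2 : m * (m + 3) = m * (m + 1) + 2 * m := by ring
  omega

def KS (x m : ℕ) : ℕ := T m + (x - 1 - T m) % (m + 1)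

lemma KS_facts {x m : ℕ} (hx : T m ≤ x - 1) :
    ∃ ℓ P, P = (m + 1) * ℓ ∧ x - 1 = KS x m + P ∧ T m ≤ KS x m ∧ KS x m ≤ T m + m := by
  refine ⟨(x - 1 - T m) / (m + 1), (m + 1) * ((x - 1 - T m) / (m + 1)), rfl, ?_, ?_, ?_⟩
  · unfold KS
    rw [Nat.add_assoc, Nat.mod_add_div, Nat.add_sub_cancel' hx]
  · exact Nat.le_add_right _ _
  · unfold KS
    have : (x - 1 - T m) % (m + 1) < m + 1 := Nat.mod_lt _ (by omega)
    omega

/-- if A - 1 = v + (m+1)ℓ with T m ≤ v ≤ T m + m then KS A m = v -/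
lemma KS_val {A v m P ℓ : ℕ} (hP : P = (m + 1) * ℓ) (hA : A - 1 = v + P) (hA1 : 1 ≤ A)
    (hv1 : T m ≤ v) (hv2 : v ≤ T m + m) : KS A m = v := by
  unfold KS
  have h1 : A - 1 - T m = (v - T m) + (m + 1) * ℓ := by omega
  rw [h1, Nat.add_mul_mod_self_left, Nat.mod_eq_of_lt (by omega)]
  omega

/-- Grundy value of triangle on *sorted* inputs x ≤ y ≤ z. -/
def Gs (x y z : ℕ) : ℕ :=
  if x = 0 then y + z
  else if x = z then 0
  else if T (y + z - 2 * x) ≤ x - 1 then KS x (y + z - 2 * x) else x + y + z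

lemma Gs_char (x y z : ℕ) (h1 : x ≤ y) (h2 : y ≤ z) :
    (x = 0 ∧ Gs x y z = y + z) ∨
    (0 < x ∧ x = z ∧ Gs x y z = 0) ∨
    (0 < x ∧ x < z ∧ T (y + z - 2 * x) ≤ x - 1 ∧ Gs x y z = KS x (y + z - 2 * x)) ∨
    (0 < x ∧ x < z ∧ x - 1 < T (y + z - 2 * x) ∧ Gs x y z = x + y + z) := by
  unfold Gs
  split_ifs with hx hz hT
  · left; omega
  · right; left; omega
  · right; right; left; exact ⟨by omega, by omega, hT, rfl⟩
  · right; right; right; exact ⟨by omega, by omega, by omega, rfl⟩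

/-- special-form triple evaluation -/
lemma Gs_special {A B C v m ℓ P : ℕ} (h1 : A ≤ B) (h2 : B ≤ C) (hm : 1 ≤ m)
    (hP : P = (m + 1) * ℓ) (hA : A = v + 1 + P) (hBC : B + C = 2 * A + m)
    (hv1 : T m ≤ v) (hv2 : v ≤ T m + m) (hAC : A < C) : Gs A B C = v := by
  have hvpos : 1 ≤ v := le_trans (T_pos hm) hv1
  have hA0 : A ≠ 0 := by omega
  have hM : B + C - 2 * A = m := by omega
  unfold Gs
  rw [if_neg hA0, if_neg (by omega), hM, if_pos (by omega)]
  exact KS_val hP (by omega) (by omega) hv1 hv2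

/-- unsorted, fully symmetric Grundy function -/
def Gf (a b c : ℕ) : ℕ :=
  Gs (min a (min b c)) (a + b + c - min a (min b c) - max a (max b c)) (max a (max b c))

lemma gf_eq_gs {a b c x y z : ℕ} (h1 : x ≤ y) (h2 : y ≤ z)
    (hmin : min a (min b c) = x) (hmax : max a (max b c) = z)
    (hsum : a + b + c = x + y + z) : Gf a b c = Gs x y z := by
  unfold Gf; rw [hmin, hmax]
  congr 1
  omega

lemma Gs_zero (B C : ℕ) : Gs 0 B C = B + C := by simp [Gs]

lemma Gs_eq (t : ℕ) (ht : 0 < t) : Gs t t t = 0 := by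
  unfold Gs; rw [if_neg (by omega), if_pos rfl]

end G4A
namespace G4A

def TMove (a b c a' b' c' : ℕ) : Prop :=
  a' ≤ a ∧ b' ≤ b ∧ c' ≤ c ∧ a' + b' + c' < a + b + c ∧ (a' = a ∨ b' = b ∨ c' = c)

lemma lemA_sorted {x y z x' y' z' t : ℕ} (h1 : x ≤ y) (h2 : y ≤ z)
    (h1' : x' ≤ y') (h2' : y' ≤ z')
    (hg : Gs x y z = Gs x' y' z')
    (ht : t = x ∨ t = y ∨ t = z) (ht' : t = x' ∨ t = y' ∨ t = z') :
    x + y + z = x' + y' + z' := by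
  -- helper facts for spec sides
  rcases Gs_char x y z h1 h2 with ⟨e0, eg⟩ | ⟨e0, e1, eg⟩ | ⟨e0, e1, eT, eg⟩ | ⟨e0, e1, eT, eg⟩ <;>
  rcases Gs_char x' y' z' h1' h2' with ⟨f0, fg⟩ | ⟨f0, f1, fg⟩ | ⟨f0, f1, fT, fg⟩ | ⟨f0, f1, fT, fg⟩
  -- 16 cases
  · omega
  · -- sum vs zero: y+z = 0 so t = 0 but t = x' > 0
    omega
  · -- sum(x=0) vs spec: Gs = y+z = KS x' M'; x' ≥ KS+1; t ≤ y+z ; t ≥ x'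
    obtain ⟨ℓ, P, hP, hx, hk1, hk2⟩ := KS_facts fT
    omega
  · omega
  · omega
  · omega
  · -- zero vs spec: 0 = KS ≥ T M' ≥ 1
    obtain ⟨ℓ, P, hP, hx, hk1, hk2⟩ := KS_facts fT
    have hM' : 1 ≤ y' + z' - 2 * x' := by omega
    have := T_pos hM'
    omega
  · omega
  · obtain ⟨ℓ, P, hP, hx, hk1, hk2⟩ := KS_facts eT
    omega
  · obtain ⟨ℓ, P, hP, hx, hk1, hk2⟩ := KS_facts eT
    have hM : 1 ≤ y + z - 2 * x := by omega
    have := T_pos hM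
    omega
  · -- spec vs spec
    obtain ⟨ℓ, P, hP, hx, hk1, hk2⟩ := KS_facts eT
    obtain ⟨ℓ', P', hP', hx', hk1', hk2'⟩ := KS_facts fT
    have hK : KS x (y + z - 2 * x) = KS x' (y' + z' - 2 * x') := by omega
    have hMeq : y + z - 2 * x = y' + z' - 2 * x' := by
      refine T_uniq (v := Gs x y z) (by omega) (by omega) ?_ ?_ <;> omega
    rw [← hMeq] at hP'
    rcases Nat.lt_trichotomy ℓ ℓ' with hll | hll | hll
    · exfalso
      have hm1 : (y + z - 2 * x + 1) * (ℓ + 1) ≤ (y + z - 2 * x + 1) * ℓ' :=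
        Nat.mul_le_mul_left _ (by omega)
      have hm2 : (y + z - 2 * x + 1) * (ℓ + 1) = P + (y + z - 2 * x + 1) := by rw [hP]; ring
      have hPP' : P + (y + z - 2 * x + 1) ≤ P' := by omega
      omega
    · subst hll; omega
    · exfalso
      have hm1 : (y + z - 2 * x + 1) * (ℓ' + 1) ≤ (y + z - 2 * x + 1) * ℓ :=
        Nat.mul_le_mul_left _ (by omega)
      have hm2 : (y + z - 2 * x + 1) * (ℓ' + 1) = P' + (y + z - 2 * x + 1) := by rw [hP']; ring
      have hPP : P' + (y + z - 2 * x + 1) ≤ P := by omega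
      omega
  · -- spec vs sum: symmetric to case 3
    obtain ⟨ℓ, P, hP, hx, hk1, hk2⟩ := KS_facts eT
    omega
  · omega
  · omega
  · obtain ⟨ℓ, P, hP, hx, hk1, hk2⟩ := KS_facts fT
    omega
  · omega

end G4A
namespace G4A

lemma lemC {x y z v m : ℕ} (h1 : x ≤ y) (h2 : y ≤ z) (hxz : x < z)
    (hv1 : 1 ≤ v) (hvx : v < x) (hm : 1 ≤ m) (hTv : T m ≤ v) (hTv2 : v ≤ T m + m)
    (hmM : m ≤ y + z - 2 * x)
    (hC1 : (x - 1 - v) % (m + 1) = 0 → m < y + z - 2 * x) :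
    ∃ p q r, TMove x y z p q r ∧ Gf p q r = v := by
  obtain ⟨ℓ, hd⟩ : ∃ ℓ, x - 1 - v = (m + 1) * ℓ + (x - 1 - v) % (m + 1) :=
    ⟨_, (Nat.div_add_mod _ _).symm⟩
  have hr' : (x - 1 - v) % (m + 1) < m + 1 := Nat.mod_lt _ (by omega)
  set r := (x - 1 - v) % (m + 1) with hrdef
  set P := (m + 1) * ℓ with hPdef
  have hx1 : x - 1 = v + (P + r) := by omega
  rcases Nat.eq_zero_or_pos r with hr0 | hr0
  · -- C1: r = 0, choose j
    have hMlt : m < y + z - 2 * x := hC1 hr0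
    set j := m + 1 - min m (z - x) with hj
    have hj1 : 1 ≤ j := by omega
    have hjm : j ≤ m := by omega
    have hjy : x - 1 + j ≤ y := by omega
    have hjz : x + m + 1 - j ≤ z := by omega
    refine ⟨x, x - 1 + j, x + m + 1 - j, ⟨le_refl x, hjy, hjz, by omega, Or.inl rfl⟩, ?_⟩
    rcases le_total (x - 1 + j) (x + m + 1 - j) with hc | hc
    · rw [gf_eq_gs (show x ≤ x - 1 + j by omega) hc (by omega) (by omega) (by omega)]
      exact Gs_special (by omega) hc hm hPdef (by omega) (by omega) hTv hTv2 (by omega)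
    · rw [gf_eq_gs (show x ≤ x + m + 1 - j by omega) hc (by omega) (by omega) (by omega)]
      exact Gs_special (by omega) hc hm hPdef (by omega) (by omega) hTv hTv2 (by omega)
  · rcases Nat.lt_or_ge (z - x + 2 * r) m with hcase | hcase
    · -- C4 : 2r < m and z - x < m - 2r ; keep y
      have ht : 2 * r + 1 ≤ y - x := by omega
      set o : ℕ := r + (y - x) + 1 with ho
      have ho2 : o ≤ m + 1 := by omega
      set c1 := v + 1 + P with hc1
      set c2 := v + (m + 2 - o) + P with hc2
      have hc1x : c1 + r = x := by omega
      have hc2z : c2 ≤ z := by omega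
      have hyo : y = v + o + P := by omega
      refine ⟨c1, y, c2, ⟨by omega, le_refl y, hc2z, by omega, Or.inr (Or.inl rfl)⟩, ?_⟩
      rcases le_total y c2 with hc | hc
      · rw [gf_eq_gs (show c1 ≤ y by omega) hc (by omega) (by omega) (by omega)]
        exact Gs_special (by omega) hc hm hPdef hc1 (by omega) hTv hTv2 (by omega)
      · rw [gf_eq_gs (show c1 ≤ c2 by omega) hc (by omega) (by omega) (by omega)]
        exact Gs_special (by omega) hc hm hPdef hc1 (by omega) hTv hTv2 (by omega)
    · -- C2/C3 : keep x, others c1 c2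
      set c1 := v + 1 + P with hc1
      set c2 := v + (m + 1 - r) + P with hc2
      have hc1x : c1 + r = x := by omega
      have hc2z : c2 ≤ z := by omega
      refine ⟨x, c1, c2, ⟨le_refl x, by omega, hc2z, by omega, Or.inl rfl⟩, ?_⟩
      rcases le_total c2 x with hc | hc
      · rw [gf_eq_gs (show c1 ≤ c2 by omega) hc (by omega) (by omega) (by omega)]
        exact Gs_special (by omega) hc hm hPdef hc1 (by omega) hTv hTv2 (by omega)
      · rw [gf_eq_gs (show c1 ≤ x by omega) hc (by omega) (by omega) (by omega)]
        exact Gs_special (by omega) hc hm hPdef hc1 (by omega) hTv hTv2 (by omega)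

lemma lemB_sorted {x y z v : ℕ} (h1 : x ≤ y) (h2 : y ≤ z) (hv : v < Gs x y z) :
    ∃ p q r, TMove x y z p q r ∧ Gf p q r = v := by
  rcases Gs_char x y z h1 h2 with ⟨e0, eg⟩ | ⟨e0, e1, eg⟩ | ⟨e0, e1, eT, eg⟩ | ⟨e0, e1, eT, eg⟩
  · -- x = 0 : Gs = y + z
    subst e0
    rcases Nat.lt_or_ge v y with hvy | hvy
    · refine ⟨0, 0, v, ⟨le_refl 0, by omega, by omega, by omega, Or.inl rfl⟩, ?_⟩
      rw [gf_eq_gs (show (0:ℕ) ≤ 0 by omega) (show 0 ≤ v by omega) (by omega) (by omega) (by omega)]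
      rw [Gs_zero]; omega
    · refine ⟨0, y, v - y, ⟨le_refl 0, le_refl y, by omega, by omega, Or.inl rfl⟩, ?_⟩
      rcases le_total y (v - y) with hc | hc
      · rw [gf_eq_gs (show (0:ℕ) ≤ y by omega) hc (by omega) (by omega) (by omega), Gs_zero]
        omega
      · rw [gf_eq_gs (show (0:ℕ) ≤ v - y by omega) hc (by omega) (by omega) (by omega), Gs_zero]
        omega
  · omega
  · -- spec source : Gs = KS x M
    obtain ⟨ℓs, Ps, hPs, hxs, hk1, hk2⟩ := KS_facts eT
    rcases Nat.eq_zero_or_pos v with hv0 | hv0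
    · subst hv0
      refine ⟨x, x, x, ⟨le_refl x, h1, by omega, by omega, Or.inl rfl⟩, ?_⟩
      rw [gf_eq_gs (le_refl x) (le_refl x) (by omega) (by omega) (by omega)]
      exact Gs_eq x e0
    · -- 1 ≤ v < KS ≤ x - 1
      have hvx : v < x := by omega
      obtain ⟨m, hm1, hm2, hm3⟩ := mval_exists hv0
      have hmM : m ≤ y + z - 2 * x := by
        by_contra hcon
        have := T_add_lt (show y + z - 2 * x < m by omega)
        omega
      refine lemC h1 h2 e1 hv0 hvx hm1 hm2 hm3 hmM ?_
      intro hr0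
      rcases Nat.lt_or_ge m (y + z - 2 * x) with h | h
      · exact h
      · -- m = M : contradiction with v < KS, same residue
        exfalso
        have hMm : y + z - 2 * x = m := by omega
        rw [hMm] at eT hxs hk1 hk2 eg hPs
        obtain ⟨ℓ, hd⟩ : ∃ ℓ, x - 1 - v = (m + 1) * ℓ + (x - 1 - v) % (m + 1) :=
          ⟨_, (Nat.div_add_mod _ _).symm⟩
        rw [hr0] at hd
        have h1' : v + (m + 1) * ℓ = KS x m + (m + 1) * ℓs := by omega
        have hℓ : ℓs < ℓ := by
          by_contra h'
          push_neg at h'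
          have := Nat.mul_le_mul_left (m + 1) h'
          omega
        have h2' := Nat.mul_le_mul_left (m + 1) (show ℓs + 1 ≤ ℓ by omega)
        have h3' : (m + 1) * (ℓs + 1) = (m + 1) * ℓs + (m + 1) := by ring
        omega
  · -- sum source : Gs = x + y + z
    rcases Nat.eq_zero_or_pos v with hv0 | hv0
    · subst hv0
      refine ⟨x, x, x, ⟨le_refl x, h1, by omega, by omega, Or.inl rfl⟩, ?_⟩
      rw [gf_eq_gs (le_refl x) (le_refl x) (by omega) (by omega) (by omega)]
      exact Gs_eq x e0
    · rcases Nat.lt_or_ge v x with hvx | hvx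
      · -- low range : lemC
        obtain ⟨m, hm1, hm2, hm3⟩ := mval_exists hv0
        have hmM : m < y + z - 2 * x := by
          by_contra hcon
          have := T_mono (show y + z - 2 * x ≤ m by omega)
          omega
        exact lemC h1 h2 e1 hv0 hvx hm1 hm2 hm3 (by omega) (fun _ => hmM)
      · rcases le_or_gt v (x + z) with hmid | hhigh
        · -- target (x, 0, v - x)
          refine ⟨x, 0, v - x, ⟨le_refl x, by omega, by omega, by omega, Or.inl rfl⟩, ?_⟩
          rcases le_total x (v - x) with hc | hc
          · rw [gf_eq_gs (show (0:ℕ) ≤ x by omega) hc (by omega) (by omega) (by omega), Gs_zero]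
            omega
          · rw [gf_eq_gs (show (0:ℕ) ≤ v - x by omega) hc (by omega) (by omega) (by omega), Gs_zero]
            omega
        · rcases le_or_gt v (y + z) with hmid2 | hhigh2
          · -- target (0, y, v - y)
            refine ⟨0, y, v - y, ⟨by omega, le_refl y, by omega, by omega, Or.inr (Or.inl rfl)⟩, ?_⟩
            rcases le_total y (v - y) with hc | hc
            · rw [gf_eq_gs (show (0:ℕ) ≤ y by omega) hc (by omega) (by omega) (by omega), Gs_zero]
              omega
            · rw [gf_eq_gs (show (0:ℕ) ≤ v - y by omega) hc (by omega) (by omega) (by omega), Gs_zero]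
              omega
          · -- high range : target (v - y - z, y, z)
            have hx0 : 1 ≤ v - y - z := by omega
            have hxlt : v - y - z < x := by omega
            refine ⟨v - y - z, y, z, ⟨by omega, le_refl y, le_refl z, by omega,
              Or.inr (Or.inl rfl)⟩, ?_⟩
            rw [gf_eq_gs (show v - y - z ≤ y by omega) h2 (by omega) (by omega) (by omega)]
            -- Gs of non-special sum triple
            have hT2 : T (y + z - 2 * x) ≤ T (y + z - 2 * (v - y - z)) :=
              T_mono (by omega)
            unfold Gs
            rw [if_neg (by omega), if_neg (by omega), if_neg (by omega)]
            omega

end G4A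
namespace G4A

lemma gf_perm {p q r p' q' r' : ℕ} (h1 : min p (min q r) = min p' (min q' r'))
    (h2 : max p (max q r) = max p' (max q' r')) (h3 : p + q + r = p' + q' + r') :
    Gf p q r = Gf p' q' r' := by
  unfold Gf; rw [h1, h2, h3]

lemma lemKeyA {a b c a' b' c' : ℕ} (h : TMove a b c a' b' c') : Gf a' b' c' ≠ Gf a b c := by
  obtain ⟨l1, l2, l3, hs, hk⟩ := h
  intro hg
  unfold Gf at hg
  have key : ∀ t, (t = a' ∨ t = b' ∨ t = c') → (t = a ∨ t = b ∨ t = c) → False := by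
    intro t ht' ht
    have hsum := lemA_sorted (x := min a' (min b' c'))
      (y := a' + b' + c' - min a' (min b' c') - max a' (max b' c')) (z := max a' (max b' c'))
      (x' := min a (min b c)) (y' := a + b + c - min a (min b c) - max a (max b c))
      (z' := max a (max b c)) (t := t)
      (by omega) (by omega) (by omega) (by omega) hg (by omega) (by omega)
    omega
  rcases hk with h | h | h
  · exact key a (by omega) (by omega)
  · exact key b (by omega) (by omega)
  · exact key c (by omega) (by omega)

lemma lemKeyB {a b c v : ℕ} (hv : v < Gf a b c) :
    ∃ a' b' c', TMove a b c a' b' c' ∧ Gf a' b' c' = v := by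
  unfold Gf at hv
  obtain ⟨p, q, r, hm, hg⟩ := lemB_sorted (by omega) (by omega) hv
  rcases le_total a b with hab | hab <;> rcases le_total b c with hbc | hbc <;>
    rcases le_total a c with hac | hac
  · exact ⟨p, q, r, by unfold TMove at hm ⊢; omega, by rw [← hg]⟩
  · exact ⟨p, q, r, by unfold TMove at hm ⊢; omega, by rw [← hg]⟩
  · exact ⟨p, r, q, by unfold TMove at hm ⊢; omega,
      by rw [← hg]; exact gf_perm (by omega) (by omega) (by omega)⟩
  · exact ⟨q, r, p, by unfold TMove at hm ⊢; omega,
      by rw [← hg]; exact gf_perm (by omega) (by omega) (by omega)⟩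
  · exact ⟨q, p, r, by unfold TMove at hm ⊢; omega,
      by rw [← hg]; exact gf_perm (by omega) (by omega) (by omega)⟩
  · exact ⟨r, p, q, by unfold TMove at hm ⊢; omega,
      by rw [← hg]; exact gf_perm (by omega) (by omega) (by omega)⟩
  · exact ⟨q, p, r, by unfold TMove at hm ⊢; omega,
      by rw [← hg]; exact gf_perm (by omega) (by omega) (by omega)⟩
  · exact ⟨r, q, p, by unfold TMove at hm ⊢; omega,
      by rw [← hg]; exact gf_perm (by omega) (by omega) (by omega)⟩

end G4A
namespace G4A

lemma fin4_sum (w : Fin 4 → ℕ) : ∑ e, w e = w 0 + w 1 + w 2 + w 3 := by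
  simp [Fin.sum_univ_four]

lemma move_tmove {w w' : Fin 4 → ℕ} (h : Move g4Inc w w') :
    (w' 3 = w 3 ∧ TMove (w 0) (w 1) (w 2) (w' 0) (w' 1) (w' 2)) ∨
    (w' 0 = w 0 ∧ w' 1 = w 1 ∧ w' 2 = w 2 ∧ w' 3 < w 3) := by
  obtain ⟨v, hle, hfix, hlt⟩ := h
  rw [fin4_sum, fin4_sum] at hlt
  have l0 := hle 0; have l1 := hle 1; have l2 := hle 2; have l3 := hle 3
  fin_cases v
  · have f1 := hfix 1 (by simp [g4Inc, g4Ends])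
    have f3 := hfix 3 (by simp [g4Inc, g4Ends])
    exact Or.inl ⟨f3, l0, by omega, l2, by omega, by omega⟩
  · have f2 := hfix 2 (by simp [g4Inc, g4Ends])
    have f3 := hfix 3 (by simp [g4Inc, g4Ends])
    exact Or.inl ⟨f3, l0, l1, by omega, by omega, by omega⟩
  · have f0 := hfix 0 (by simp [g4Inc, g4Ends])
    have f3 := hfix 3 (by simp [g4Inc, g4Ends])
    exact Or.inl ⟨f3, by omega, l1, l2, by omega, by omega⟩
  · have f0 := hfix 0 (by simp [g4Inc, g4Ends])
    have f1 := hfix 1 (by simp [g4Inc, g4Ends])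
    have f2 := hfix 2 (by simp [g4Inc, g4Ends])
    exact Or.inr ⟨f0, f1, f2, by omega⟩
  · have f0 := hfix 0 (by simp [g4Inc, g4Ends])
    have f1 := hfix 1 (by simp [g4Inc, g4Ends])
    have f2 := hfix 2 (by simp [g4Inc, g4Ends])
    exact Or.inr ⟨f0, f1, f2, by omega⟩

lemma tmove_move {w : Fin 4 → ℕ} {a' b' c' : ℕ}
    (h : TMove (w 0) (w 1) (w 2) a' b' c') :
    Move g4Inc w ![a', b', c', w 3] := by
  obtain ⟨l1, l2, l3, hs, hk⟩ := h
  rcases hk with hkk | hkk | hkk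
  · refine ⟨2, ?_, ?_, ?_⟩
    · intro e; fin_cases e <;> simp <;> omega
    · intro e he
      fin_cases e
      · simpa using hkk
      · exact absurd (by simp [g4Inc, g4Ends]) he
      · exact absurd (by simp [g4Inc, g4Ends]) he
      · simp
    · rw [fin4_sum, fin4_sum]; simp; omega
  · refine ⟨0, ?_, ?_, ?_⟩
    · intro e; fin_cases e <;> simp <;> omega
    · intro e he
      fin_cases e
      · exact absurd (by simp [g4Inc, g4Ends]) he
      · simpa using hkk
      · exact absurd (by simp [g4Inc, g4Ends]) he
      · simp
    · rw [fin4_sum, fin4_sum]; simp; omega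
  · refine ⟨1, ?_, ?_, ?_⟩
    · intro e; fin_cases e <;> simp <;> omega
    · intro e he
      fin_cases e
      · exact absurd (by simp [g4Inc, g4Ends]) he
      · exact absurd (by simp [g4Inc, g4Ends]) he
      · simpa using hkk
      · simp
    · rw [fin4_sum, fin4_sum]; simp; omega

lemma pile_move {w : Fin 4 → ℕ} {n : ℕ} (h : n < w 3) :
    Move g4Inc w ![w 0, w 1, w 2, n] := by
  refine ⟨3, ?_, ?_, ?_⟩
  · intro e; fin_cases e <;> simp <;> omega
  · intro e he
    fin_cases e
    · simp
    · simp
    · simp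
    · exact absurd (by simp [g4Inc, g4Ends]) he
  · rw [fin4_sum, fin4_sum]; simp; omega

def Lw (w : Fin 4 → ℕ) : Prop := w 3 = Gf (w 0) (w 1) (w 2)

lemma not_L_winning {w : Fin 4 → ℕ} (h : ¬ Lw w) :
    ∃ w', Move g4Inc w w' ∧ Lw w' := by
  rcases Nat.lt_or_ge (w 3) (Gf (w 0) (w 1) (w 2)) with hlt | hge
  · obtain ⟨a', b', c', hm, hg⟩ := lemKeyB hlt
    refine ⟨![a', b', c', w 3], tmove_move hm, ?_⟩
    show (![a', b', c', w 3]) 3 = Gf _ _ _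
    simp [hg.symm]
  · have hlt : Gf (w 0) (w 1) (w 2) < w 3 := by
      rcases Nat.lt_or_ge (Gf (w 0) (w 1) (w 2)) (w 3) with h' | h'
      · exact h'
      · exact absurd (by unfold Lw; omega) h
    refine ⟨![w 0, w 1, w 2, Gf (w 0) (w 1) (w 2)], pile_move hlt, ?_⟩
    show (![w 0, w 1, w 2, _]) 3 = Gf _ _ _
    simp

lemma L_not_after_move {w w' : Fin 4 → ℕ} (hL : Lw w) (hm : Move g4Inc w w') :
    ¬ Lw w' := by
  intro hL'
  rcases move_tmove hm with ⟨h3, htm⟩ | ⟨h0, h1, h2, h3⟩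
  · exact lemKeyA htm (by unfold Lw at hL hL'; omega)
  · rw [Lw, h0, h1, h2] at hL'
    unfold Lw at hL
    omega

lemma L_losing : ∀ n (w : Fin 4 → ℕ), (∑ e, w e) ≤ n → Lw w → Losing g4Inc w := by
  intro n
  induction n with
  | zero =>
    intro w hn _
    rw [Losing]
    intro w' hmv
    obtain ⟨v, _, _, hlt⟩ := hmv
    omega
  | succ n ih =>
    intro w hn hL
    rw [Losing]
    intro w' hmv hlos'
    have hs' : (∑ e, w' e) < (∑ e, w e) := by obtain ⟨v, _, _, hlt⟩ := hmv; exact hlt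
    have hnL' := L_not_after_move hL hmv
    obtain ⟨w'', hmv'', hL''⟩ := not_L_winning hnL'
    have hs'' : (∑ e, w'' e) < (∑ e, w' e) := by obtain ⟨v, _, _, hlt⟩ := hmv''; exact hlt
    have hlos'' := ih w'' (by omega) hL''
    rw [Losing] at hlos'
    exact hlos' w'' hmv'' hlos''

lemma p213 (a b c : ℕ) : ({a, b, c} : Multiset ℕ) = {b, a, c} :=
  Multiset.cons_swap a b {c}

lemma p132 (a b c : ℕ) : ({a, b, c} : Multiset ℕ) = {a, c, b} :=
  congrArg (Multiset.cons a) (Multiset.cons_swap b c 0)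

lemma p231 (a b c : ℕ) : ({a, b, c} : Multiset ℕ) = {b, c, a} :=
  (p213 a b c).trans (p132 b a c)

lemma p312 (a b c : ℕ) : ({a, b, c} : Multiset ℕ) = {c, a, b} :=
  (p132 a b c).trans (p213 a c b)

lemma p321 (a b c : ℕ) : ({a, b, c} : Multiset ℕ) = {c, b, a} :=
  (p231 a b c).trans (p213 b c a)

lemma multiset_sort3 (a b c : ℕ) : ({a, b, c} : Multiset ℕ) =
    {min a (min b c), a + b + c - min a (min b c) - max a (max b c), max a (max b c)} := by
  rcases le_total a b with hab | hab <;> rcases le_total b c with hbc | hbc <;>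
    rcases le_total a c with hac | hac
  · rw [show min a (min b c) = a by omega, show max a (max b c) = c by omega,
      show a + b + c - a - c = b by omega]
  · rw [show min a (min b c) = a by omega, show max a (max b c) = c by omega,
      show a + b + c - a - c = b by omega]
  · rw [show min a (min b c) = a by omega, show max a (max b c) = b by omega,
      show a + b + c - a - b = c by omega]
    exact p132 a b c
  · rw [show min a (min b c) = c by omega, show max a (max b c) = b by omega,
      show a + b + c - c - b = a by omega]
    exact p312 a b c
  · rw [show min a (min b c) = b by omega, show max a (max b c) = c by omega,
      show a + b + c - b - c = a by omega]
    exact p213 a b c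
  · rw [show min a (min b c) = b by omega, show max a (max b c) = a by omega,
      show a + b + c - b - a = c by omega]
    exact p231 a b c
  · rw [show min a (min b c) = a by omega, show max a (max b c) = c by omega,
      show a + b + c - a - c = b by omega]
  · rw [show min a (min b c) = c by omega, show max a (max b c) = a by omega,
      show a + b + c - c - a = b by omega]
    exact p321 a b c

lemma spec_Special {x y z : ℕ} (h1 : x ≤ y) (h2 : y ≤ z) (h0 : 0 < x) (hxz : x < z)
    (hT : T (y + z - 2 * x) ≤ x - 1) : Special {x, y, z} := by
  obtain ⟨ℓ, P, hP, hx, hk1, hk2⟩ := KS_facts hT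
  have hM1 : 1 ≤ y + z - 2 * x := by omega
  refine ⟨KS x (y + z - 2 * x), y + z - 2 * x, y - x + 1, ℓ, ?_, hM1, by omega, by omega,
    ?_, ?_, ?_⟩
  · have := T_pos hM1; omega
  · rw [← T_eq]; exact hk1
  · rw [← T_eq']; exact hk2
  · have e1 : KS x (y + z - 2 * x) + 1 + (y + z - 2 * x + 1) * ℓ = x := by omega
    have e2 : KS x (y + z - 2 * x) + (y - x + 1) + (y + z - 2 * x + 1) * ℓ = y := by omega
    have e3 : KS x (y + z - 2 * x) + (y + z - 2 * x) + 2 - (y - x + 1) +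
        (y + z - 2 * x + 1) * ℓ = z := by omega
    rw [e1, e2, e3]

end G4A

open G4A in
theorem g4_losing_sum' (w : Fin 4 → ℕ) (hpos : ∀ e, 0 < w e)
    (hsum : w 3 = w 0 + w 1 + w 2)
    (hne : ¬(w 0 = w 1 ∧ w 1 = w 2))
    (hns : ¬ Special {w 0, w 1, w 2}) :
    Losing g4Inc w := by
  have p0 := hpos 0; have p1 := hpos 1; have p2 := hpos 2
  refine L_losing (∑ e, w e) w (le_refl _) ?_
  unfold Lw Gf
  rcases Gs_char (min (w 0) (min (w 1) (w 2)))
      (w 0 + w 1 + w 2 - min (w 0) (min (w 1) (w 2)) - max (w 0) (max (w 1) (w 2)))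
      (max (w 0) (max (w 1) (w 2))) (by omega) (by omega) with
    ⟨e0, eg⟩ | ⟨e0, e1, eg⟩ | ⟨e0, e1, eT, eg⟩ | ⟨e0, e1, eT, eg⟩
  · omega
  · omega
  · exact absurd (by rw [multiset_sort3 (w 0) (w 1) (w 2)]
                     exact spec_Special (by omega) (by omega) e0 e1 eT) hns
  · omega

/-- On `G₄`, if `w(DE) = w(AB)+w(BC)+w(CA)`, the triangle weights are not all
equal, and `{w(AB), w(BC), w(CA)}` is not special, then the configuration is
losing for the player to move. -/
theorem g4_losing_sum (w : Fin 4 → ℕ) (hpos : ∀ e, 0 < w e)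
    (hsum : w 3 = w 0 + w 1 + w 2)
    (hne : ¬(w 0 = w 1 ∧ w 1 = w 2))
    (hns : ¬ Special {w 0, w 1, w 2}) :
    Losing g4Inc w := by
  exact g4_losing_sum' w hpos hsum hne hns
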